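/- arXiv:math/0609786 — 4 statements merged into one kernel-verified Lean document; each statement's English description precedes it below -/
import Mathlib

section
/- Let S be a submonoid of a polycyclic-by-finite group G = SS⁻¹ and assume S satisfies the ascending chain condition on right ideals. Let H = Δ⁺(G), the maximal finite normal subgroup of G, and let ∼ be the congruence on S defined by s ∼ t if and only if sH = tH. Then the map Spec(S) → Spec(S/∼) defined by P ↦ P/∼ is a bijection. -/
open scoped Pointwise

universe u v

section GroupMonoidDefs

variable {G : Type u} [Group G]

/-- `G` is the group of (two-sided) quotients of the submonoid `S`. -/
def IsGroupOfQuotients (S : Submonoid G) : Prop :=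
  ∀ g : G, ∃ s ∈ S, ∃ t ∈ S, g = s * t⁻¹

/-- the set of quotients `s * t⁻¹` of elements of a submonoid. -/
def quotSet (S : Submonoid G) : Set G :=
  {g : G | ∃ s ∈ S, ∃ t ∈ S, g = s * t⁻¹}

/-- a subset of a group closed under conjugation by all group elements. -/
def IsGInvariant (X : Set G) : Prop :=
  ∀ g : G, ∀ x ∈ X, g * x * g⁻¹ ∈ X

/-- the conjugacy class of an element. -/
def conjClassSet (x : G) : Set G :=
  {y : G | ∃ g : G, y = g * x * g⁻¹}

/-- right ideal of a submonoid, given as a subset of the ambient group. -/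
def IsRightIdealOfSubmonoid (S : Submonoid G) (I : Set G) : Prop :=
  I.Nonempty ∧ I ⊆ (S : Set G) ∧ ∀ x ∈ I, ∀ s ∈ S, x * s ∈ I

/-- ascending chain condition on right ideals of a submonoid. -/
def ACCRightIdeals (S : Submonoid G) : Prop :=
  ∀ f : ℕ → Set G, (∀ n, IsRightIdealOfSubmonoid S (f n)) →
    (∀ n, f n ⊆ f (n + 1)) → ∃ N, ∀ n, N ≤ n → f n = f N

/-- (two-sided) ideal of a submonoid. -/
def IsIdealOfSubmonoid (S : Submonoid G) (I : Set G) : Prop :=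
  I.Nonempty ∧ I ⊆ (S : Set G) ∧ ∀ s ∈ S, ∀ x ∈ I, ∀ t ∈ S, s * x * t ∈ I

/-- prime ideal of a submonoid. -/
def IsPrimeIdealOfSubmonoid (S : Submonoid G) (P : Set G) : Prop :=
  IsIdealOfSubmonoid S P ∧ P ≠ (S : Set G) ∧
    ∀ I J : Set G, IsIdealOfSubmonoid S I → IsIdealOfSubmonoid S J →
      I * J ⊆ P → I ⊆ P ∨ J ⊆ P

/-- minimal prime ideal of a submonoid. -/
def IsMinimalPrimeOfSubmonoid (S : Submonoid G) (P : Set G) : Prop :=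
  IsPrimeIdealOfSubmonoid S P ∧
    ∀ Q : Set G, IsPrimeIdealOfSubmonoid S Q → Q ⊆ P → Q = P

/-- prime ideal of a submonoid which is minimal over the subset `I`. -/
def IsMinimalPrimeOver (S : Submonoid G) (I Q : Set G) : Prop :=
  IsPrimeIdealOfSubmonoid S Q ∧ I ⊆ Q ∧
    ∀ Q' : Set G, IsPrimeIdealOfSubmonoid S Q' → I ⊆ Q' → Q' ⊆ Q → Q' = Q

/-- `P`, a prime ideal of `S`, lies over `Q`, a prime ideal of `S ∩ H`:
`Q` is minimal over `P ∩ H` and `P ∩ H` is the intersection of all primes of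
`S ∩ H` minimal over `P ∩ H`. -/
def LiesOver (S : Submonoid G) (H : Subgroup G) (P Q : Set G) : Prop :=
  IsPrimeIdealOfSubmonoid S P ∧
  IsMinimalPrimeOver (S ⊓ H.toSubmonoid) (P ∩ (H : Set G)) Q ∧
  P ∩ (H : Set G) =
    ⋂₀ {Q' : Set G | IsMinimalPrimeOver (S ⊓ H.toSubmonoid) (P ∩ (H : Set G)) Q'}

/-- the unit group of a submonoid of a group, as a subgroup. -/
def unitGroup (S : Submonoid G) : Subgroup G where
  carrier := {g : G | g ∈ S ∧ g⁻¹ ∈ S}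
  one_mem' := ⟨S.one_mem, by simpa using S.one_mem⟩
  mul_mem' := by
    intro a b ha hb
    exact ⟨S.mul_mem ha.1 hb.1, by
      rw [mul_inv_rev]; exact S.mul_mem hb.2 ha.2⟩
  inv_mem' := by
    intro a ha
    exact ⟨ha.2, by simpa using ha.1⟩

/-- `S` is a maximal order within its group of quotients. -/
def IsMaximalOrderWithin (S : Submonoid G) : Prop :=
  ∀ T : Submonoid G, S ≤ T → (T : Set G) ⊆ quotSet S →
    (∃ a ∈ quotSet S, ∃ b ∈ quotSet S, ∀ t ∈ T, a * t * b ∈ S) → T = S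

/-- a chain `∅ = Q₀ ⊂ Q₁ ⊂ ⋯ ⊂ Qₙ` of prime ideals of `S` (of length `n`). -/
def HasMonoidDimChain (S : Submonoid G) (n : ℕ) : Prop :=
  ∃ c : Fin (n + 1) → Set G, c 0 = ∅ ∧
    (∀ i : Fin (n + 1), i ≠ 0 → IsPrimeIdealOfSubmonoid S (c i)) ∧
    ∀ i j : Fin (n + 1), i < j → c i ⊂ c j

/-- the prime dimension of the monoid `S` equals `n`. -/
def MonoidDimEq (S : Submonoid G) (n : ℕ) : Prop :=
  HasMonoidDimChain S n ∧ ¬ HasMonoidDimChain S (n + 1)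

/-- a chain `∅ = Q₀ ⊂ Q₁ ⊂ ⋯ ⊂ Qₙ = P` of prime ideals ending at `P`. -/
def HasMonoidHeightChain (S : Submonoid G) (P : Set G) (n : ℕ) : Prop :=
  ∃ c : Fin (n + 1) → Set G, c 0 = ∅ ∧ c (Fin.last n) = P ∧
    (∀ i : Fin (n + 1), i ≠ 0 → IsPrimeIdealOfSubmonoid S (c i)) ∧
    ∀ i j : Fin (n + 1), i < j → c i ⊂ c j

/-- the height of the prime ideal `P` of `S` equals `n`. -/
def MonoidHeightEq (S : Submonoid G) (P : Set G) (n : ℕ) : Prop :=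
  HasMonoidHeightChain S P n ∧ ¬ HasMonoidHeightChain S P (n + 1)

/-- a chain `Q₀ ⊂ ⋯ ⊂ Qₙ` of primes of `S` containing `P`; this corresponds to a
chain of primes of the Rees quotient `S/P` (including its zero ideal). -/
def HasDimChainOver (S : Submonoid G) (P : Set G) (n : ℕ) : Prop :=
  ∃ c : Fin (n + 1) → Set G,
    (∀ i, IsPrimeIdealOfSubmonoid S (c i) ∧ P ⊆ c i) ∧
    ∀ i j : Fin (n + 1), i < j → c i ⊂ c j

/-- the prime dimension of the Rees quotient `S/P` equals `n`. -/
def DimOverEq (S : Submonoid G) (P : Set G) (n : ℕ) : Prop :=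
  HasDimChainOver S P n ∧ ¬ HasDimChainOver S P (n + 1)

/-- the Rees quotient `S/P` contains a free abelian subsemigroup of rank `k`. -/
def HasFreeAbelianInRank (S : Submonoid G) (P : Set G) (k : ℕ) : Prop :=
  ∃ x : Fin k → G, (∀ i, x i ∈ S ∧ x i ∉ P) ∧
    (∀ i j, x i * x j = x j * x i) ∧
    (∀ m : Fin k → ℕ, m ≠ 0 → (List.ofFn fun i => x i ^ m i).prod ∉ P) ∧
    ∀ m m' : Fin k → ℕ,
      (List.ofFn fun i => x i ^ m i).prod = (List.ofFn fun i => x i ^ m' i).prod → m = m'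

/-- the rank of the Rees quotient monoid `S/P` equals `r`. -/
def ReesRankEq (S : Submonoid G) (P : Set G) (r : ℕ) : Prop :=
  HasFreeAbelianInRank S P r ∧ ¬ HasFreeAbelianInRank S P (r + 1)

/-- the factor `B/A` is a cyclic group, generated by the image of some `x ∈ B`. -/
def FactorCyclic (A B : Subgroup G) : Prop :=
  ∃ x ∈ B, ∀ y ∈ B, ∃ k : ℤ, (x ^ k)⁻¹ * y ∈ A

/-- the factor `B/A` is an infinite cyclic group. -/
def FactorInfiniteCyclic (A B : Subgroup G) : Prop :=
  ∃ x ∈ B, (∀ y ∈ B, ∃ k : ℤ, (x ^ k)⁻¹ * y ∈ A) ∧ ∀ k : ℤ, x ^ k ∈ A → k = 0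

end GroupMonoidDefs

/-- a group is polycyclic-by-finite: it has a subnormal series with each factor
cyclic or finite. -/
def IsPolycyclicByFinite (G : Type u) [Group G] : Prop :=
  ∃ (n : ℕ) (c : Fin (n + 1) → Subgroup G),
    c 0 = ⊥ ∧ c (Fin.last n) = ⊤ ∧
    ∀ i : Fin n, c i.castSucc ≤ c i.succ ∧
      (∀ x ∈ c i.succ, ∀ y ∈ c i.castSucc, x * y * x⁻¹ ∈ c i.castSucc) ∧
      (FactorCyclic (c i.castSucc) (c i.succ) ∨ (c i.castSucc).relIndex (c i.succ) ≠ 0)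

/-- a group is poly-(infinite cyclic): it has a subnormal series with each factor
infinite cyclic. -/
def IsPolyInfiniteCyclicGroup (G : Type u) [Group G] : Prop :=
  ∃ (n : ℕ) (c : Fin (n + 1) → Subgroup G),
    c 0 = ⊥ ∧ c (Fin.last n) = ⊤ ∧
    ∀ i : Fin n, c i.castSucc ≤ c i.succ ∧
      (∀ x ∈ c i.succ, ∀ y ∈ c i.castSucc, x * y * x⁻¹ ∈ c i.castSucc) ∧
      FactorInfiniteCyclic (c i.castSucc) (c i.succ)

/-- a group is abelian-by-finite: it has an abelian normal subgroup of finite index. -/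
def IsAbelianByFinite (G : Type u) [Group G] : Prop :=
  ∃ A : Subgroup G, A.Normal ∧ A.FiniteIndex ∧ ∀ x ∈ A, ∀ y ∈ A, x * y = y * x

/-- `Δ⁺(G)`: the set of periodic elements having finitely many conjugates. -/
def deltaPlusSet (G : Type u) [Group G] : Set G :=
  {g : G | (∃ n : ℕ, 0 < n ∧ g ^ n = 1) ∧ (conjClassSet g).Finite}

/-- a group is dihedral free if the normalizer of every infinite dihedral subgroup
has infinite index. -/
def IsDihedralFree (G : Type u) [Group G] : Prop :=
  ∀ D : Subgroup G, Nonempty (D ≃* DihedralGroup 0) → (Subgroup.normalizer (D : Set G)).index = 0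

/-- the torsion-free rank of a (finitely generated abelian-by-finite) group:
the rank of a free abelian subgroup of finite index. -/
def HasTorsionFreeRank (G : Type u) [Group G] (r : ℕ) : Prop :=
  ∃ A : Subgroup G, A.FiniteIndex ∧ Nonempty (A ≃* Multiplicative (Fin r → ℤ))

/-- `B/A` is a plinth section of `G`: a nontrivial torsion-free abelian section
which is rationally irreducible under every subgroup of finite index of `G`. -/
def IsPlinthSection (G : Type u) [Group G] (A B : Subgroup G) : Prop :=
  A < B ∧
  (∀ x ∈ B, ∀ y ∈ B, x * y * x⁻¹ * y⁻¹ ∈ A) ∧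
  (∀ x ∈ B, ∀ n : ℕ, 0 < n → x ^ n ∈ A → x ∈ A) ∧
  ∀ W : Subgroup G, W.FiniteIndex →
    ∀ C : Subgroup G, A ≤ C → C ≤ B →
      (∀ w ∈ W, ∀ c ∈ C, w * c * w⁻¹ ∈ C) →
      (C = A ∨ ∀ x ∈ B, ∃ n : ℕ, 0 < n ∧ x ^ n ∈ C)

/-- the plinth length of `G` equals `p`: some finite index subgroup `G₀` has a
series whose factors are finite or plinths, with exactly `p` plinth factors. -/
def PlinthLengthEq (G : Type u) [Group G] (p : ℕ) : Prop :=
  ∃ G₀ : Subgroup G, G₀.FiniteIndex ∧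
    ∃ (n : ℕ) (c : Fin (n + 1) → Subgroup G) (pl : Fin n → Bool),
      c 0 = ⊥ ∧ c (Fin.last n) = G₀ ∧
      (∀ i : Fin n, c i.castSucc ≤ c i.succ) ∧
      (∀ i : Fin (n + 1), ∀ g ∈ G₀, ∀ x ∈ c i, g * x * g⁻¹ ∈ c i) ∧
      (∀ i : Fin n,
        (pl i = true → IsPlinthSection G (c i.castSucc) (c i.succ)) ∧
        (pl i = false → (c i.castSucc).relIndex (c i.succ) ≠ 0)) ∧
      (Finset.univ.filter fun i => pl i = true).card = p

/-- (two-sided) ideal of an abstract monoid. -/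
def IsIdealOfMonoid (M : Type u) [Monoid M] (I : Set M) : Prop :=
  I.Nonempty ∧ ∀ s x t : M, x ∈ I → s * x * t ∈ I

/-- prime ideal of an abstract monoid. -/
def IsPrimeIdealOfMonoid (M : Type u) [Monoid M] (P : Set M) : Prop :=
  IsIdealOfMonoid M P ∧ P ≠ Set.univ ∧
    ∀ I J : Set M, IsIdealOfMonoid M I → IsIdealOfMonoid M J →
      I * J ⊆ P → I ⊆ P ∨ J ⊆ P

/-- a realization of a group of (two-sided) quotients of a monoid `S`. -/
structure GroupOfQuotientsRealization (S : Type u) [Monoid S] : Type (u + 1) where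
  carrier : Type u
  [grp : Group carrier]
  emb : S →* carrier
  inj : Function.Injective emb
  quot : ∀ g : carrier, ∃ s t : S, g = emb s * (emb t)⁻¹

section RingDefs

/-- two-sided ideal of a ring, as a set. -/
def IsTwoSidedIdealSet (R : Type u) [Ring R] (I : Set R) : Prop :=
  (0 : R) ∈ I ∧ (∀ x ∈ I, ∀ y ∈ I, x + y ∈ I) ∧ (∀ x ∈ I, -x ∈ I) ∧
    ∀ r : R, ∀ x ∈ I, r * x ∈ I ∧ x * r ∈ I

/-- prime two-sided ideal of a (possibly noncommutative) ring. -/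
def IsPrimeTwoSidedIdeal (R : Type u) [Ring R] (P : Set R) : Prop :=
  IsTwoSidedIdealSet R P ∧ P ≠ Set.univ ∧
    ∀ a b : R, (∀ r : R, a * r * b ∈ P) → a ∈ P ∨ b ∈ P

/-- a prime ring. -/
def IsPrimeRing (R : Type u) [Ring R] : Prop :=
  ∀ a b : R, (∀ r : R, a * r * b = 0) → a = 0 ∨ b = 0

/-- a chain `P₀ ⊂ ⋯ ⊂ Pₙ = P` of prime two-sided ideals ending at `P`. -/
def HasPrimeChainTo (R : Type u) [Ring R] (P : Set R) (n : ℕ) : Prop :=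
  ∃ c : Fin (n + 1) → Set R, (∀ i, IsPrimeTwoSidedIdeal R (c i)) ∧
    (∀ i j : Fin (n + 1), i < j → c i ⊂ c j) ∧ c (Fin.last n) = P

/-- the height of the prime two-sided ideal `P` equals `n`. -/
def RingHeightEq (R : Type u) [Ring R] (P : Set R) (n : ℕ) : Prop :=
  HasPrimeChainTo R P n ∧ ¬ HasPrimeChainTo R P (n + 1)

/-- a chain `P₀ ⊂ ⋯ ⊂ Pₙ` of prime two-sided ideals of `R`. -/
def HasRingPrimeChain (R : Type u) [Ring R] (n : ℕ) : Prop :=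
  ∃ c : Fin (n + 1) → Set R, (∀ i, IsPrimeTwoSidedIdeal R (c i)) ∧
    ∀ i j : Fin (n + 1), i < j → c i ⊂ c j

/-- the classical Krull dimension of `R` equals `n`. -/
def ClKdimEq (R : Type u) [Ring R] (n : ℕ) : Prop :=
  HasRingPrimeChain R n ∧ ¬ HasRingPrimeChain R (n + 1)

/-- a prime two-sided ideal minimal over the set `I`. -/
def IsMinimalPrimeOverRing (R : Type u) [Ring R] (I P : Set R) : Prop :=
  IsPrimeTwoSidedIdeal R P ∧ I ⊆ P ∧
    ∀ P' : Set R, IsPrimeTwoSidedIdeal R P' → I ⊆ P' → P' ⊆ P → P' = P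

/-- `f : R →+* Q` realizes `Q` as the classical (two-sided) quotient ring of `R`. -/
def IsClassicalQuotientRing {R Q : Type u} [Ring R] [Ring Q] (f : R →+* Q) : Prop :=
  Function.Injective f ∧
  (∀ r : R, IsRegular r → IsUnit (f r)) ∧
  (∀ q : Q, ∃ r s : R, IsRegular s ∧ q * f s = f r) ∧
  (∀ q : Q, ∃ r s : R, IsRegular s ∧ f s * q = f r)

/-- `R` is a maximal order: for every realization of its classical quotient ring `Q`,
there is no intermediate ring `R ⊆ T ⊆ Q` with `aTb ⊆ R` for regular `a b ∈ Q`
other than (the image of) `R` itself. -/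
def IsRingMaximalOrder (R : Type u) [Ring R] : Prop :=
  ∀ (Q : Type u) [Ring Q], ∀ f : R →+* Q, IsClassicalQuotientRing f →
    ∀ T : Subring Q, (∀ r : R, f r ∈ T) →
      (∃ a b : Q, IsRegular a ∧ IsRegular b ∧
        ∀ t ∈ T, ∃ r : R, a * t * b = f r) →
      ∀ t ∈ T, ∃ r : R, t = f r

/-- `R` satisfies a polynomial identity: a monic noncommutative polynomial with
integer coefficients vanishing identically on `R`. -/
def IsPIRing (R : Type u) [Ring R] : Prop :=
  ∃ (n : ℕ) (f : MonoidAlgebra ℤ (FreeMonoid (Fin n))),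
    (∃ w : FreeMonoid (Fin n), f.coeff w = 1 ∧
      ∀ w' : FreeMonoid (Fin n), f.coeff w' ≠ 0 →
        (FreeMonoid.toList w').length ≤ (FreeMonoid.toList w).length) ∧
    ∀ v : Fin n → R,
      (MonoidAlgebra.lift ℤ R (FreeMonoid (Fin n))) (FreeMonoid.lift v) f = 0

end RingDefs

/-- the `K`-linear span `K[Q]` of a subset `Q` of a monoid `M` inside `K[M]`. -/
def monoidSpan (K : Type u) [Field K] {M : Type v} [Monoid M] (Q : Set M) :
    Set (MonoidAlgebra K M) :=
  ↑(Submodule.span K ((fun m : M => (MonoidAlgebra.of K M m : MonoidAlgebra K M)) '' Q))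

/-- the `K`-linear span `K[Q]` of a subset `Q ⊆ S` inside the semigroup algebra `K[S]`. -/
def submonoidSpan (K : Type u) [Field K] {G : Type v} [Group G] (S : Submonoid G)
    (Q : Set G) : Set (MonoidAlgebra K ↥S) :=
  ↑(Submodule.span K
      ((fun s : ↥S => (MonoidAlgebra.of K ↥S s : MonoidAlgebra K ↥S)) ''
        {s : ↥S | (s : G) ∈ Q}))

/-! A prime `P` of `S` is a union of `∼`-classes. Indeed, if `p ∈ S`, `q ∈ P` and
`p⁻¹q ∈ H`, then every element `upv` of the ideal `SpS` agrees with `uqv ∈ P` modulo `H`,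
and since `H` consists of periodic elements with finite conjugacy classes, some power of
`upv` equals the same power of `uqv`. So `SpS` is nil modulo `P`, and a Levitzki-type
argument (ACC on the right residuals `{x | cx ∈ P}`) puts it inside `P`. Once every prime is
saturated, taking images and preimages along `G → G/H` are inverse bijections on primes. -/

section PeriodicConjugates

variable {G : Type u} [Group G]

lemma exists_pow_commute_of_conjClassSet_finite {h : G} (hfin : (conjClassSet h).Finite)
    (a : G) : ∃ m, 0 < m ∧ Commute (a ^ m) h := by
  obtain ⟨i, j, hij, hconj⟩ := hfin.exists_lt_map_eq_of_forall_mem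
    (f := fun n : ℕ => a ^ n * h * (a ^ n)⁻¹)
    fun n => (⟨a ^ n, rfl⟩ : ∃ g, _ = g * h * g⁻¹)
  obtain ⟨k, rfl⟩ := Nat.exists_eq_add_of_lt hij
  refine ⟨k + 1, k.succ_pos, ?_⟩
  rw [add_assoc, pow_add] at hconj
  have hfix : a ^ (k + 1) * h * (a ^ (k + 1))⁻¹ = h := calc
    _ = (a ^ i)⁻¹ * (a ^ i * a ^ (k + 1) * h * (a ^ i * a ^ (k + 1))⁻¹) * a ^ i := by group
    _ = h := by rw [← hconj]; group
  exact mul_inv_eq_iff_eq_mul.mp hfix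

lemma exists_mem_pow_mul_eq_pow_mul {K : Submonoid G} {a h : G}
    (hK : ∀ x ∈ K, a⁻¹ * x * a ∈ K) (hh : h ∈ K) (n : ℕ) :
    ∃ c ∈ K, (a * h) ^ n = a ^ n * c := by
  induction n with
  | zero => exact ⟨1, K.one_mem, by simp⟩
  | succ n ih =>
    obtain ⟨c, hc, hpow⟩ := ih
    refine ⟨a⁻¹ * c * a * h, K.mul_mem (hK c hc) hh, ?_⟩
    rw [pow_succ, hpow, pow_succ]
    group

lemma exists_pow_eq_pow_of_inv_mul_mem {H : Subgroup G} [H.Normal]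
    (hH : (H : Set G) ⊆ deltaPlusSet G) {a b : G} (hab : a⁻¹ * b ∈ H) :
    ∃ N, 0 < N ∧ b ^ N = a ^ N := by
  obtain ⟨m, hm, hcomm⟩ := exists_pow_commute_of_conjClassSet_finite (hH hab).2 a
  -- `a` normalises `H` and commutes with `a ^ m`, so it normalises `H ∩ C(a ^ m)`.
  set K := H ⊓ Subgroup.centralizer {a ^ m}
  have hK : ∀ x ∈ K.toSubmonoid, a⁻¹ * x * a ∈ K.toSubmonoid := by
    rintro x ⟨hxH, hxC⟩
    refine ⟨by simpa using Subgroup.Normal.conj_mem ‹_› x hxH a⁻¹, ?_⟩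
    have hxa : Commute (a ^ m) x := (Subgroup.mem_centralizer_singleton_iff.mp hxC).symm
    have haa : Commute (a ^ m) a := (Commute.refl a).pow_left m
    exact Subgroup.mem_centralizer_singleton_iff.mpr
      ((haa.inv_right.mul_right hxa).mul_right haa).symm
  obtain ⟨c, ⟨hcH, hcC⟩, hpow⟩ := exists_mem_pow_mul_eq_pow_mul hK
    (h := a⁻¹ * b) ⟨hab, Subgroup.mem_centralizer_singleton_iff.mpr hcomm.symm⟩ m
  rw [mul_inv_cancel_left] at hpow
  obtain ⟨q, hq, hcq⟩ := (hH hcH).1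
  refine ⟨m * q, Nat.mul_pos hm hq, ?_⟩
  calc b ^ (m * q) = (a ^ m * c) ^ q := by rw [pow_mul, hpow]
    _ = (a ^ m) ^ q * c ^ q :=
        Commute.mul_pow (Subgroup.mem_centralizer_singleton_iff.mp hcC).symm q
    _ = a ^ (m * q) := by rw [hcq, mul_one, pow_mul]

end PeriodicConjugates

section Ideals

variable {G : Type u} [Group G] {S : Submonoid G} {P I : Set G}

def principalIdeal (S : Submonoid G) (c : G) : Set G :=
  {y | ∃ u ∈ S, ∃ v ∈ S, y = u * c * v}

lemma mem_principalIdeal_self (c : G) : c ∈ principalIdeal S c :=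
  ⟨1, S.one_mem, 1, S.one_mem, by simp⟩

lemma isIdealOfSubmonoid_principalIdeal {c : G} (hc : c ∈ S) :
    IsIdealOfSubmonoid S (principalIdeal S c) := by
  refine ⟨⟨c, mem_principalIdeal_self c⟩, ?_, ?_⟩
  · rintro _ ⟨u, hu, v, hv, rfl⟩
    exact S.mul_mem (S.mul_mem hu hc) hv
  · rintro s hs _ ⟨u, hu, v, hv, rfl⟩ t ht
    exact ⟨s * u, S.mul_mem hs hu, v * t, S.mul_mem hv ht, by simp only [mul_assoc]⟩

def rightResidual (S : Submonoid G) (P : Set G) (c : G) : Set G :=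
  {x | x ∈ S ∧ c * x ∈ P}

lemma IsIdealOfSubmonoid.isRightIdeal_rightResidual (hP : IsIdealOfSubmonoid S P) {c : G}
    (hc : c ∈ S) : IsRightIdealOfSubmonoid S (rightResidual S P c) := by
  obtain ⟨⟨w, hw⟩, hPS, hmul⟩ := hP
  refine ⟨⟨w, hPS hw, by simpa using hmul c hc w hw 1 S.one_mem⟩, fun x hx => hx.1, ?_⟩
  rintro x ⟨hxS, hcx⟩ s hs
  exact ⟨S.mul_mem hxS hs, by simpa [mul_assoc] using hmul 1 S.one_mem _ hcx s hs⟩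

lemma ACCRightIdeals.exists_maximal {ι : Type*} (hacc : ACCRightIdeals S) {C : Set ι}
    (hC : C.Nonempty) (r : ι → Set G) (hr : ∀ c ∈ C, IsRightIdealOfSubmonoid S (r c)) :
    ∃ a ∈ C, ∀ c ∈ C, r a ⊆ r c → r c = r a := by
  have : WellFoundedGT {J : Set G // IsRightIdealOfSubmonoid S J} := by
    refine wellFoundedGT_iff_monotone_chain_condition.mpr fun f => ?_
    obtain ⟨N, hN⟩ := hacc (fun n => (f n).1) (fun n => (f n).2)
      (fun n => f.monotone n.le_succ)
    exact ⟨N, fun n hn => Subtype.ext (hN n hn).symm⟩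
  let ideal : C → {J : Set G // IsRightIdealOfSubmonoid S J} := fun c => ⟨r c, hr c c.2⟩
  obtain ⟨⟨a, haC⟩, -, hmax⟩ :=
    (InvImage.wf ideal wellFounded_gt).has_min Set.univ ⟨⟨_, hC.some_mem⟩, trivial⟩
  refine ⟨a, haC, fun c hcC hac => ?_⟩
  have hle : ideal ⟨a, haC⟩ ≤ ideal ⟨c, hcC⟩ := hac
  exact congrArg Subtype.val
    ((hle.lt_or_eq.resolve_left (hmax ⟨c, hcC⟩ trivial)).symm)

lemma IsPrimeIdealOfSubmonoid.mem_of_forall_mul_mul_mem (hP : IsPrimeIdealOfSubmonoid S P)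
    {c : G} (hc : c ∈ S) (hcxc : ∀ x ∈ S, c * x * c ∈ P) : c ∈ P := by
  have hsq : principalIdeal S c * principalIdeal S c ⊆ P := by
    rintro _ ⟨_, ⟨u, hu, v, hv, rfl⟩, _, ⟨u', hu', v', hv', rfl⟩, rfl⟩
    have h := hP.1.2.2 u hu _ (hcxc _ (S.mul_mem hv hu')) v' hv'
    simpa only [mul_assoc] using h
  have hI := isIdealOfSubmonoid_principalIdeal hc
  exact (hP.2.2 _ _ hI hI hsq).elim (· (mem_principalIdeal_self c))
    (· (mem_principalIdeal_self c))

/-- The inductive step of the Levitzki-type argument: if `(x a)ʲ ∉ P` then maximality of the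
residual of `a` forces the residuals of `a` and `(x a)ʲ` to agree. -/
lemma mul_mul_mem_of_pow_mem (hP : IsIdealOfSubmonoid S P) (hI : IsIdealOfSubmonoid S I)
    {a : G} (ha : a ∈ I)
    (hmax : ∀ e ∈ I, e ∉ P → rightResidual S P a ⊆ rightResidual S P e →
      rightResidual S P e = rightResidual S P a)
    {x : G} (hx : x ∈ S) (j : ℕ) (hpow : (x * a) ^ (j + 1) ∈ P) : a * x * a ∈ P := by
  have haS : a ∈ S := hI.2.1 ha
  induction j with
  | zero => simpa [mul_assoc] using hP.2.2 a haS _ hpow 1 S.one_mem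
  | succ j ih =>
    by_cases he : (x * a) ^ (j + 1) ∈ P
    · exact ih he
    have hprefix : (x * a) ^ j * x ∈ S := S.mul_mem (S.pow_mem (S.mul_mem hx haS) j) hx
    have hsplit : ∀ t, (x * a) ^ (j + 1) * t = (x * a) ^ j * x * (a * t) * 1 := by
      intro t; simp only [pow_succ, mul_assoc, mul_one]
    have heI : (x * a) ^ (j + 1) ∈ I := by
      simpa [pow_succ, mul_assoc] using hI.2.2 _ hprefix a ha 1 S.one_mem
    have hsub : rightResidual S P a ⊆ rightResidual S P ((x * a) ^ (j + 1)) :=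
      fun t ⟨htS, hat⟩ => ⟨htS, by rw [hsplit]; exact hP.2.2 _ hprefix _ hat 1 S.one_mem⟩
    have hxa : x * a ∈ rightResidual S P ((x * a) ^ (j + 1)) :=
      ⟨S.mul_mem hx haS, by rwa [← pow_succ]⟩
    rw [hmax _ heI he hsub] at hxa
    simpa [mul_assoc] using hxa.2

theorem IsPrimeIdealOfSubmonoid.subset_of_forall_pow_mem (hacc : ACCRightIdeals S)
    (hP : IsPrimeIdealOfSubmonoid S P) (hI : IsIdealOfSubmonoid S I)
    (hnil : ∀ y ∈ I, ∃ n, y ^ (n + 1) ∈ P) : I ⊆ P := by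
  by_contra hIP
  obtain ⟨c, hcI, hcP⟩ := Set.not_subset.mp hIP
  obtain ⟨a, ⟨haI, haP⟩, hmax⟩ := hacc.exists_maximal (C := I \ P) ⟨c, hcI, hcP⟩
    (rightResidual S P) fun e he => hP.1.isRightIdeal_rightResidual (hI.2.1 he.1)
  refine haP (hP.mem_of_forall_mul_mul_mem (hI.2.1 haI) fun x hx => ?_)
  obtain ⟨n, hn⟩ := hnil (x * a) (by simpa using hI.2.2 x hx a haI 1 S.one_mem)
  exact mul_mul_mem_of_pow_mem hP.1 hI haI (fun e he heP => hmax e ⟨he, heP⟩) hx n hn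

theorem IsPrimeIdealOfSubmonoid.mem_of_inv_mul_mem (hacc : ACCRightIdeals S)
    (hP : IsPrimeIdealOfSubmonoid S P) {H : Subgroup G} [H.Normal]
    (hH : (H : Set G) ⊆ deltaPlusSet G) {p q : G} (hp : p ∈ S) (hq : q ∈ P)
    (hpq : p⁻¹ * q ∈ H) : p ∈ P := by
  refine hP.subset_of_forall_pow_mem hacc (isIdealOfSubmonoid_principalIdeal hp) ?_
    (mem_principalIdeal_self p)
  rintro _ ⟨u, hu, v, hv, rfl⟩
  have hconj : (u * p * v)⁻¹ * (u * q * v) ∈ H := by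
    have h := Subgroup.Normal.conj_mem ‹_› _ hpq v⁻¹
    simpa [mul_assoc] using h
  obtain ⟨N, hN, hpow⟩ := exists_pow_eq_pow_of_inv_mul_mem hH hconj
  obtain ⟨n, rfl⟩ := Nat.exists_eq_add_of_lt hN
  refine ⟨n, ?_⟩
  rw [zero_add] at hpow
  rw [← hpow, pow_succ]
  simpa using hP.1.2.2 _ (S.pow_mem (S.mul_mem (S.mul_mem hu (hP.1.2.1 hq)) hv) n) _
    (hP.1.2.2 u hu q hq v hv) 1 S.one_mem

end Ideals

section Transfer

variable {G : Type u} [Group G] {G' : Type v} [Group G'] {S : Submonoid G} (π : G →* G')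

def IsSaturated (S : Submonoid G) (P : Set G) : Prop :=
  ∀ x ∈ S, ∀ q ∈ P, π x = π q → x ∈ P

lemma IsIdealOfSubmonoid.image {I : Set G} (hI : IsIdealOfSubmonoid S I) :
    IsIdealOfSubmonoid (S.map π) (π '' I) := by
  obtain ⟨hne, hIS, hmul⟩ := hI
  refine ⟨hne.image π, Set.image_mono hIS, ?_⟩
  rintro _ ⟨s, hs, rfl⟩ _ ⟨x, hx, rfl⟩ _ ⟨t, ht, rfl⟩
  exact ⟨s * x * t, hmul s hs x hx t ht, by simp only [map_mul]⟩

lemma IsIdealOfSubmonoid.preimage_inter {I' : Set G'}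
    (hI' : IsIdealOfSubmonoid (S.map π) I') : IsIdealOfSubmonoid S (π ⁻¹' I' ∩ S) := by
  obtain ⟨⟨y, hy⟩, hIS', hmul'⟩ := hI'
  obtain ⟨x, hxS, rfl⟩ := hIS' hy
  refine ⟨⟨x, hy, hxS⟩, Set.inter_subset_right, ?_⟩
  rintro s hs x ⟨hx, hxS⟩ t ht
  refine ⟨?_, S.mul_mem (S.mul_mem hs hxS) ht⟩
  simpa only [Set.mem_preimage, map_mul] using
    hmul' _ ⟨s, hs, rfl⟩ _ hx _ ⟨t, ht, rfl⟩

lemma image_preimage_inter_of_subset {I' : Set G'} (hI' : I' ⊆ S.map π) :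
    π '' (π ⁻¹' I' ∩ S) = I' := by
  rw [Set.image_preimage_inter, ← Submonoid.coe_map, Set.inter_eq_left.mpr hI']

lemma IsSaturated.preimage_image_inter {P : Set G} (hsat : IsSaturated π S P)
    (hPS : P ⊆ S) : π ⁻¹' (π '' P) ∩ S = P := by
  refine Set.Subset.antisymm ?_ fun x hx => ⟨⟨x, hx, rfl⟩, hPS hx⟩
  rintro x ⟨⟨q, hq, hqx⟩, hxS⟩
  exact hsat x hxS q hq hqx.symm

lemma IsPrimeIdealOfSubmonoid.image {P : Set G} (hP : IsPrimeIdealOfSubmonoid S P)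
    (hsat : IsSaturated π S P) : IsPrimeIdealOfSubmonoid (S.map π) (π '' P) := by
  refine ⟨hP.1.image π, fun hPS => hP.2.1 ?_, fun I' J' hI' hJ' hIJ => ?_⟩
  · rw [← hsat.preimage_image_inter π hP.1.2.1, hPS, Submonoid.coe_map,
      Set.inter_eq_right.mpr (Set.subset_preimage_image π S)]
  · have hIJ' : (π ⁻¹' I' ∩ S) * (π ⁻¹' J' ∩ S) ⊆ P := by
      rintro _ ⟨i, ⟨hi, hiS⟩, j, ⟨hj, hjS⟩, rfl⟩
      obtain ⟨q, hq, hqij⟩ := hIJ ⟨π i, hi, π j, hj, (map_mul π i j).symm⟩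
      exact hsat _ (S.mul_mem hiS hjS) q hq hqij.symm
    refine (hP.2.2 _ _ (hI'.preimage_inter π) (hJ'.preimage_inter π) hIJ').imp
      (fun h => ?_) (fun h => ?_)
    · simpa only [image_preimage_inter_of_subset π hI'.2.1] using Set.image_mono (f := π) h
    · simpa only [image_preimage_inter_of_subset π hJ'.2.1] using Set.image_mono (f := π) h

lemma IsPrimeIdealOfSubmonoid.preimage_inter {P' : Set G'}
    (hP' : IsPrimeIdealOfSubmonoid (S.map π) P') :
    IsPrimeIdealOfSubmonoid S (π ⁻¹' P' ∩ S) := by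
  refine ⟨hP'.1.preimage_inter π, fun hPS => hP'.2.1 ?_, fun I J hI hJ hIJ => ?_⟩
  · rw [← image_preimage_inter_of_subset π hP'.1.2.1, hPS, Submonoid.coe_map]
  · have hIJ' : π '' I * π '' J ⊆ P' := by
      rw [← Set.image_mul]
      exact (Set.image_mono hIJ).trans (Set.image_preimage_inter π _ _ ▸ Set.inter_subset_left)
    exact (hP'.2.2 _ _ (hI.image π) (hJ.image π) hIJ').imp
      (fun h => Set.subset_inter (Set.image_subset_iff.mp h) hI.2.1)
      (fun h => Set.subset_inter (Set.image_subset_iff.mp h) hJ.2.1)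

theorem bijOn_image_primeIdeals
    (hsat : ∀ P, IsPrimeIdealOfSubmonoid S P → IsSaturated π S P) :
    Set.BijOn (fun P => π '' P) {P | IsPrimeIdealOfSubmonoid S P}
      {P' | IsPrimeIdealOfSubmonoid (S.map π) P'} := by
  refine ⟨fun P hP => hP.image π (hsat P hP), fun P₁ hP₁ P₂ hP₂ h => ?_,
    fun P' hP' => ?_⟩
  · rw [← (hsat P₁ hP₁).preimage_image_inter π hP₁.1.2.1,
      ← (hsat P₂ hP₂).preimage_image_inter π hP₂.1.2.1]
    exact congrArg (π ⁻¹' · ∩ S) h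
  · exact ⟨_, hP'.preimage_inter π, image_preimage_inter_of_subset π hP'.1.2.1⟩

end Transfer

theorem spec_bijection_deltaPlus_general
    {G : Type u} [Group G] (S : Submonoid G)
    (hacc : ACCRightIdeals S)
    (H : Subgroup G) [hHn : H.Normal]
    (hH : (H : Set G) = deltaPlusSet G) :
    Set.BijOn (fun P : Set G => (⇑(QuotientGroup.mk' H)) '' P)
      {P : Set G | IsPrimeIdealOfSubmonoid S P}
      {P' : Set (G ⧸ H) |
        IsPrimeIdealOfSubmonoid (Submonoid.map (QuotientGroup.mk' H) S) P'} :=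
  bijOn_image_primeIdeals _ fun _ hP _ hx _ hq hxq =>
    hP.mem_of_inv_mul_mem hacc hH.subset hx hq (QuotientGroup.eq.mp hxq)

/-- `Spec S → Spec (S/∼)` is a bijection,
where `∼` is the congruence determined by `H = Δ⁺(G)`. -/
theorem spec_bijection_deltaPlus
    {G : Type u} [Group G] (S : Submonoid G)
    (hpoly : IsPolycyclicByFinite G)
    (hquot : IsGroupOfQuotients S)
    (hacc : ACCRightIdeals S)
    (H : Subgroup G) [hHn : H.Normal]
    (hH : (H : Set G) = deltaPlusSet G) :
    Set.BijOn (fun P : Set G => (⇑(QuotientGroup.mk' H)) '' P)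
      {P : Set G | IsPrimeIdealOfSubmonoid S P}
      {P' : Set (G ⧸ H) |
        IsPrimeIdealOfSubmonoid (Submonoid.map (QuotientGroup.mk' H) S) P'} :=
  spec_bijection_deltaPlus_general S hacc H (hHn := hHn) hH
end

section
/- Let S be a submonoid of an abelian-by-finite group G = SS⁻¹ and let A be an abelian normal subgroup of finite index in G. If S is a maximal order in G, then S ∩ A is G-invariant and S ∩ A is a maximal order in its group of quotients. -/
open scoped Pointwise

universe u v

/-!
For `x ∈ S ∩ A` the conjugacy class `C` of `x` is finite, because `A` is abelian of finite index,
and every conjugate is `t * x * t⁻¹` with `t ∈ S`, so all its powers have the common right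
denominator `t ^ [G : A] ∈ S ∩ A`. Since `A` is abelian, the product of these denominators is a
common denominator `d` for the whole monoid `⟨C⟩`; then `⟨C⟩ * S` is a monoid with
`⟨C⟩ * S * d ⊆ S`, and maximality of `S` forces `C ⊆ S`.

For the second claim, if `a * T * b ⊆ S ∩ A` with `a = α * β⁻¹` and `b = γ * δ⁻¹`, then `α * γ`
is a common denominator of the powers of any `τ ∈ T`; by the invariance of `S ∩ A` its conjugates
are denominators for the conjugates of `τ`, and the same argument gives `τ ∈ S`.
-/

namespace Submonoid

theorem exists_forall_closure_mul_mem {M : Type*} [CommMonoid M] (W : Submonoid M)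
    (F : Finset M) (h : ∀ c ∈ F, ∃ e ∈ W, ∀ k : ℕ, c ^ k * e ∈ W) :
    ∃ d ∈ W, ∀ m ∈ closure (F : Set M), m * d ∈ W := by
  choose e heW he using h
  refine ⟨∏ c ∈ F.attach, e c c.2, prod_mem _ fun c _ => heW c c.2, fun m hm => ?_⟩
  obtain ⟨f, -, rfl⟩ := mem_closure_finset.mp hm
  rw [← Finset.prod_attach, ← Finset.prod_mul_distrib]
  exact prod_mem _ fun c _ => he c c.2 (f c)

end Submonoid

section

variable {G : Type u} [Group G]

theorem exists_forall_closure_mul_mem_of_comm {A : Subgroup G}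
    (hab : ∀ x ∈ A, ∀ y ∈ A, x * y = y * x) {W : Submonoid G} (hW : W ≤ A.toSubmonoid)
    {C : Set G} (hCA : C ⊆ A) (hC : C.Finite)
    (h : ∀ c ∈ C, ∃ e ∈ W, ∀ k : ℕ, c ^ k * e ∈ W) :
    ∃ d ∈ W, ∀ m ∈ Submonoid.closure C, m * d ∈ W := by
  let _ : CommMonoid A := { mul_comm := fun a b => Subtype.ext (hab a a.2 b b.2) }
  set F := (hC.preimage A.subtype_injective.injOn).toFinset with hF
  obtain ⟨d, hdW, hd⟩ := (W.comap A.subtype).exists_forall_closure_mul_mem F (by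
    intro c hc
    obtain ⟨e, heW, he⟩ := h c (by simpa [F] using hc)
    exact ⟨⟨e, hW heW⟩, heW, he⟩)
  refine ⟨d, hdW, fun m hm => ?_⟩
  have hmap : m ∈ (Submonoid.closure (F : Set A)).map A.subtype := by
    rwa [MonoidHom.map_mclosure, hF, Set.Finite.coe_toFinset, Subgroup.coe_subtype,
      Set.image_preimage_eq_of_subset (by simpa using hCA)]
  obtain ⟨m', hm', rfl⟩ := hmap
  exact hd m' hm'

theorem IsGInvariant.closure {C : Set G} (hC : IsGInvariant C) :
    IsGInvariant (Submonoid.closure C : Set G) := by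
  intro g m hm
  induction hm using Submonoid.closure_induction with
  | mem x hx => exact Submonoid.subset_closure (hC g x hx)
  | one => simp
  | mul x y _ _ hx hy =>
    have : g * (x * y) * g⁻¹ = g * x * g⁻¹ * (g * y * g⁻¹) := by group
    rw [this]
    exact mul_mem hx hy

theorem mem_conjClassSet_self (x : G) : x ∈ conjClassSet x := ⟨1, by group⟩

theorem isGInvariant_conjClassSet (x : G) : IsGInvariant (conjClassSet x) := by
  rintro g _ ⟨h, rfl⟩
  exact ⟨g * h, by group⟩

theorem conjClassSet_subset_of_mem {H : Subgroup G} [hH : H.Normal] {x : G} (hx : x ∈ H) :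
    conjClassSet x ⊆ H := by
  rintro _ ⟨g, rfl⟩
  exact hH.conj_mem x hx g

theorem conjClassSet_finite {H : Subgroup G} [H.FiniteIndex] {x : G}
    (hx : ∀ h ∈ H, h * x = x * h) : (conjClassSet x).Finite := by
  have : Finite (G ⧸ H) := Subgroup.finite_quotient_of_finiteIndex
  refine (Set.finite_range fun q : G ⧸ H => q.out * x * q.out⁻¹).subset ?_
  rintro _ ⟨g, rfl⟩
  obtain ⟨⟨h, hH⟩, hh⟩ := QuotientGroup.mk_out_eq_mul H g
  refine ⟨g, ?_⟩
  simp only [hh]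
  calc g * h * x * (g * h)⁻¹ = g * (h * x) * h⁻¹ * g⁻¹ := by group
    _ = g * x * g⁻¹ := by rw [hx h hH]; group

theorem Subgroup.mul_pow_index_sub_one_mem (H : Subgroup G) [H.Normal] [H.FiniteIndex] (t : G) :
    t * t ^ (H.index - 1) ∈ H := by
  rw [← pow_succ', Nat.sub_add_cancel (Nat.one_le_iff_ne_zero.mpr FiniteIndex.index_ne_zero)]
  exact H.pow_index_mem t

theorem IsGroupOfQuotients.exists_mem_conj_eq {S : Submonoid G} (hquot : IsGroupOfQuotients S)
    {H : Subgroup G} [H.Normal] [H.FiniteIndex] {x : G} (hx : ∀ h ∈ H, h * x = x * h) (g : G) :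
    ∃ t ∈ S, g * x * g⁻¹ = t * x * t⁻¹ := by
  obtain ⟨s, hs, t, ht, rfl⟩ := hquot g
  set p := t ^ (H.index - 1)
  have htp : t * p ∈ H := H.mul_pow_index_sub_one_mem t
  refine ⟨s * p, mul_mem hs (pow_mem ht _), ?_⟩
  calc s * t⁻¹ * x * (s * t⁻¹)⁻¹ = s * t⁻¹ * (x * (t * p)) * p⁻¹ * s⁻¹ := by group
    _ = s * t⁻¹ * ((t * p) * x) * p⁻¹ * s⁻¹ := by rw [← hx _ htp]
    _ = s * p * x * (s * p)⁻¹ := by group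

theorem IsMaximalOrderWithin.subset_of_closure_mul_mem {S : Submonoid G}
    (hmax : IsMaximalOrderWithin S) {C : Set G} (hC : IsGInvariant C) {d : G} (hdS : d ∈ S)
    (hd : ∀ m ∈ Submonoid.closure C, m * d ∈ S) : C ⊆ S := by
  have hCl := hC.closure
  have hmsd : ∀ m ∈ Submonoid.closure C, ∀ s ∈ S, m * s * d ∈ S := by
    intro m hm s hs
    have : m * s * d = s * (s⁻¹ * m * s⁻¹⁻¹ * d) := by group
    rw [this]
    exact mul_mem hs (hd _ (hCl s⁻¹ m hm))
  -- the submonoid generated by `S ∪ C` is `closure C * S`, since `S` normalizes `closure C`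
  let T : Submonoid G :=
    { carrier := {t | ∃ m ∈ Submonoid.closure C, ∃ s ∈ S, t = m * s}
      one_mem' := ⟨1, one_mem _, 1, one_mem _, by simp⟩
      mul_mem' := by
        rintro _ _ ⟨m, hm, s, hs, rfl⟩ ⟨m', hm', s', hs', rfl⟩
        exact ⟨m * (s * m' * s⁻¹), mul_mem hm (hCl s m' hm'), s * s', mul_mem hs hs', by group⟩ }
  have hTS : T = S := by
    refine hmax T (fun s hs => ⟨1, one_mem _, s, hs, (one_mul s).symm⟩) ?_
      ⟨1, ⟨1, one_mem _, 1, one_mem _, by simp⟩, d, ⟨d, hdS, 1, one_mem _, by simp⟩, ?_⟩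
    · rintro _ ⟨m, hm, s, hs, rfl⟩
      exact ⟨m * s * d, hmsd m hm s hs, d, hdS, by group⟩
    · rintro _ ⟨m, hm, s, hs, rfl⟩
      rw [one_mul]
      exact hmsd m hm s hs
  intro c hc
  change c ∈ S
  rw [← hTS]
  exact ⟨c, Submonoid.subset_closure hc, 1, one_mem _, (mul_one c).symm⟩

theorem quotSet_inf_subset (S : Submonoid G) (A : Subgroup G) :
    quotSet (S ⊓ A.toSubmonoid) ⊆ A := by
  rintro _ ⟨p, hp, q, hq, rfl⟩
  exact mul_mem hp.2 (inv_mem hq.2)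

section AbelianNormal

variable {S : Submonoid G} {A : Subgroup G} [hA : A.Normal] [A.FiniteIndex]

theorem IsMaximalOrderWithin.conjClassSet_subset (hmax : IsMaximalOrderWithin S)
    (hab : ∀ x ∈ A, ∀ y ∈ A, x * y = y * x) {x : G} (hxA : x ∈ A)
    (h : ∀ c ∈ conjClassSet x, ∃ e ∈ S ⊓ A.toSubmonoid, ∀ k : ℕ, c ^ k * e ∈ S ⊓ A.toSubmonoid) :
    conjClassSet x ⊆ S := by
  obtain ⟨d, hdW, hd⟩ := exists_forall_closure_mul_mem_of_comm hab inf_le_right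
    (conjClassSet_subset_of_mem hxA) (conjClassSet_finite fun y hy => hab y hy x hxA) h
  exact hmax.subset_of_closure_mul_mem (isGInvariant_conjClassSet x) hdW.1
    fun m hm => (hd m hm).1

theorem IsMaximalOrderWithin.conj_mem (hmax : IsMaximalOrderWithin S)
    (hquot : IsGroupOfQuotients S) (hab : ∀ x ∈ A, ∀ y ∈ A, x * y = y * x) {x : G}
    (hxS : x ∈ S) (hxA : x ∈ A) (g : G) : g * x * g⁻¹ ∈ S := by
  refine hmax.conjClassSet_subset hab hxA ?_ ⟨g, rfl⟩
  rintro _ ⟨h, rfl⟩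
  obtain ⟨t, htS, hgt⟩ := hquot.exists_mem_conj_eq (fun y hy => hab y hy x hxA) h
  set p := t ^ (A.index - 1)
  have htp : t * p ∈ A := A.mul_pow_index_sub_one_mem t
  refine ⟨t * p, ⟨mul_mem htS (pow_mem htS _), htp⟩, fun k => ⟨?_, ?_⟩⟩
  · have : (h * x * h⁻¹) ^ k * (t * p) = t * x ^ k * p := by rw [hgt, conj_pow]; group
    rw [this]
    exact mul_mem (mul_mem htS (pow_mem hxS k)) (pow_mem htS _)
  · exact mul_mem (pow_mem (hA.conj_mem x hxA h) k) htp

theorem IsMaximalOrderWithin.inf_of_isGInvariant (hmax : IsMaximalOrderWithin S)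
    (hab : ∀ x ∈ A, ∀ y ∈ A, x * y = y * x) (hinv : IsGInvariant ((S : Set G) ∩ A)) :
    IsMaximalOrderWithin (S ⊓ A.toSubmonoid) := by
  rintro T hWT hTq ⟨_, ⟨α, hα, β, hβ, rfl⟩, _, ⟨γ, hγ, δ, hδ, rfl⟩, habT⟩
  refine le_antisymm (fun τ hτ => ?_) hWT
  have hτA : τ ∈ A := quotSet_inf_subset S A (hTq hτ)
  have hpow : ∀ k : ℕ, τ ^ k * (α * γ) ∈ S ⊓ A.toSubmonoid := by
    intro k
    have hτk : τ ^ k * γ ∈ A := mul_mem (pow_mem hτA k) hγ.2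
    have : α * β⁻¹ * τ ^ k * (γ * δ⁻¹) * (δ * β) = τ ^ k * (α * γ) := by
      calc α * β⁻¹ * τ ^ k * (γ * δ⁻¹) * (δ * β) = α * (β⁻¹ * (τ ^ k * γ * β)) := by group
        _ = α * (τ ^ k * γ) := by rw [hab _ hτk β hβ.2]; group
        _ = τ ^ k * (α * γ) := by rw [← mul_assoc, hab α hα.2 _ (pow_mem hτA k), mul_assoc]
    rw [← this]
    exact mul_mem (habT _ (pow_mem hτ k)) (mul_mem hδ hβ)
  have hτS : τ ∈ S := by
    refine hmax.conjClassSet_subset hab hτA ?_ (mem_conjClassSet_self τ)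
    rintro _ ⟨g, rfl⟩
    refine ⟨g * (α * γ) * g⁻¹, hinv g _ (mul_mem hα hγ), fun k => ?_⟩
    have : (g * τ * g⁻¹) ^ k * (g * (α * γ) * g⁻¹) = g * (τ ^ k * (α * γ)) * g⁻¹ := by
      rw [conj_pow]; group
    rw [this]
    exact hinv g _ (hpow k)
  exact ⟨hτS, hτA⟩

end AbelianNormal

end

/-- if `S` is a maximal order then `S ∩ A` is `G`-invariant and a
maximal order in its group of quotients. -/
theorem inter_abelian_invariant_and_maximalOrder_of_maximalOrder
    {G : Type u} [Group G] (S : Submonoid G)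
    (hquot : IsGroupOfQuotients S)
    (A : Subgroup G) (hnorm : A.Normal)
    (hab : ∀ x ∈ A, ∀ y ∈ A, x * y = y * x)
    (hfi : A.FiniteIndex)
    (hmax : IsMaximalOrderWithin S) :
    IsGInvariant ((S : Set G) ∩ (A : Set G)) ∧
    IsMaximalOrderWithin (S ⊓ A.toSubmonoid) := by
  have hinv : IsGInvariant ((S : Set G) ∩ A) := fun g x hx =>
    ⟨hmax.conj_mem hquot hab hx.1 hx.2 g, hnorm.conj_mem x hx.2 g⟩
  exact ⟨hinv, hmax.inf_of_isGInvariant hab hinv⟩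
end

section
/- Let A be an abelian normal subgroup of finite index in a group G. Suppose B is a submonoid of A with A = BB⁻¹ such that B is a finitely generated maximal order. Let S be a submonoid of G with G = SS⁻¹ and S ∩ A = B. Then S is a maximal order satisfying the ascending chain condition on right ideals if and only if S is maximal among all submonoids T of G with T ∩ A = B. -/
open scoped Pointwise

universe u v

/-!
Since `G/A` is finite and `G = SS⁻¹`, there are finitely many `σ_q ∈ S` (one for each coset `q`)
with `σ_q g ∈ A` for `g ∈ q`. If `S ≤ T` and `T ∩ A = B`, the product `c` of the powers
`σ_q ^ |G : A| ∈ B` satisfies `cT ⊆ S`, so a maximal order `S` admits no such `T ≠ S`.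
Conversely, if `aTb ⊆ S`, moving `a` and `b` into `A` by elements of `S` shows that `T ∩ A` is an
order equivalent to `B`, hence equal to it. The ACC for right ideals `I` of `S` reduces, through
`I ↦ (B ∩ σ_q I)_q`, to chains of ideals of `B`, which stabilize because divisibility in a finitely
generated commutative monoid is a well-quasi-order (Dickson's lemma).
-/

open scoped IsMulCommutative

theorem WellQuasiOrdered.monotone_chain_condition {α : Type*} {r : α → α → Prop}
    (hr : WellQuasiOrdered r) (X : ℕ →o Set α) (hX : ∀ n, ∀ x ∈ X n, ∀ y, r x y → y ∈ X n) :
    ∃ N, ∀ n, N ≤ n → X N = X n := by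
  let UpClosed := {t : Set α // ∀ x ∈ t, ∀ y, r x y → y ∈ t}
  have : WellFoundedGT UpClosed := by
    refine ⟨wellFounded_iff_isEmpty_descending_chain.mpr ⟨fun ⟨f, hf⟩ => ?_⟩⟩
    choose x hx using fun n => Set.exists_of_ssubset (hf n)
    obtain ⟨m, n, hmn, hxmn⟩ := hr x
    have hle : f (m + 1) ≤ f n := (strictMono_nat_of_lt_succ hf).monotone hmn
    exact (hx n).2 ((f n).2 _ (hle (hx m).1) _ hxmn)
  obtain ⟨N, hN⟩ := WellFoundedGT.monotone_chain_condition
    (⟨fun n => ⟨X n, hX n⟩, fun _ _ h => X.mono h⟩ : ℕ →o UpClosed)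
  exact ⟨N, fun n hn => congrArg Subtype.val (hN n hn)⟩

theorem wellQuasiOrdered_dvd (M : Type*) [CommMonoid M] [Monoid.FG M] :
    WellQuasiOrdered (α := M) (· ∣ ·) := by
  obtain ⟨s, hs⟩ := Monoid.FG.fg_top (M := M)
  let π : (s → ℕ) → M := fun e => ∏ i : s, (i : M) ^ e i
  refine wellQuasiOrdered_le.of_surjective
    ⟨π, fun {e e'} h => Finset.prod_dvd_prod_of_dvd _ _ fun i _ => pow_dvd_pow _ (h i)⟩ ?_
  intro x
  obtain ⟨e, rfl⟩ := Submonoid.mem_closure_iff_of_fintype.mp (hs ▸ Submonoid.mem_top x)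
  exact ⟨e, rfl⟩

section

variable {G : Type u} [Group G]

theorem accRightIdeals_of_fg_of_mul_mem {S B : Submonoid G} [IsMulCommutative B] (hBfg : B.FG)
    (hBS : B ≤ S) {ι : Type*} [Finite ι] (σ : ι → G) (hσ : ∀ x ∈ S, ∃ i, σ i * x ∈ B) :
    ACCRightIdeals S := by
  intro f hf hsucc
  have hmono : Monotone f := monotone_nat_of_le_succ hsucc
  have : Monoid.FG B := (Monoid.fg_iff_submonoid_fg B).mpr hBfg
  -- `f n` is recovered from the finitely many chains `Y i n = B ∩ σ i (f n)` of ideals of `B`.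
  let Y (i : ι) (n : ℕ) : Set B := {z | (σ i)⁻¹ * z ∈ f n}
  have hY : ∀ i, ∃ N, ∀ n, N ≤ n → Y i N = Y i n := by
    refine fun i => (wellQuasiOrdered_dvd B).monotone_chain_condition
      ⟨Y i, fun _ _ h _ hz => hmono h hz⟩ ?_
    rintro n z hz _ ⟨c, rfl⟩
    change (σ i)⁻¹ * (z * c) ∈ f n
    rw [← mul_assoc]
    exact (hf n).2.2 _ hz c (hBS c.2)
  choose N hN using hY
  obtain ⟨N₀, hN₀⟩ := Finite.bddAbove_range N
  have hYN₀ : ∀ i n, N₀ ≤ n → Y i N₀ = Y i n := fun i n hn => by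
    have hi : N i ≤ N₀ := hN₀ ⟨i, rfl⟩
    rw [← hN i N₀ hi, hN i n (hi.trans hn)]
  refine ⟨N₀, fun n hn => (hmono hn).antisymm' fun x hx => ?_⟩
  obtain ⟨i, hi⟩ := hσ x ((hf n).2.1 hx)
  have hxY : (⟨σ i * x, hi⟩ : B) ∈ Y i n := by simpa [Y] using hx
  rw [← hYN₀ i n hn] at hxY
  simpa [Y] using hxY

variable (A : Subgroup G) [A.Normal] [A.FiniteIndex] {S T : Submonoid G}

theorem exists_mem_mul_mem_of_isGroupOfQuotients (hS : IsGroupOfQuotients S) (g : G) :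
    ∃ s ∈ S, s * g ∈ A := by
  obtain ⟨s, hs, t, ht, rfl⟩ := hS g
  refine ⟨t * s ^ (A.index - 1), S.mul_mem ht (S.pow_mem hs _), ?_⟩
  have hconj := Subgroup.Normal.conj_mem ‹_› _ (A.pow_index_mem s) t
  rwa [← pow_sub_one_mul Subgroup.FiniteIndex.index_ne_zero, ← mul_assoc, mul_assoc _ s] at hconj

theorem exists_coset_rep_mul_mem (hS : IsGroupOfQuotients S) :
    ∃ σ : G ⧸ A → G, (∀ q, σ q ∈ S) ∧ ∀ g : G, σ g * g ∈ A := by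
  choose σ hσS hσA using fun q : G ⧸ A => exists_mem_mul_mem_of_isGroupOfQuotients A hS q.out
  refine ⟨σ, hσS, fun g => ?_⟩
  obtain ⟨a, ha⟩ := QuotientGroup.mk_out_eq_mul A g
  have := hσA g
  rwa [ha, ← mul_assoc, A.mul_mem_cancel_right a.2] at this

theorem exists_forall_mul_mem_of_inf_eq (hS : IsGroupOfQuotients S)
    [IsMulCommutative ↥(S ⊓ A.toSubmonoid)] (hST : S ≤ T)
    (hTA : T ⊓ A.toSubmonoid = S ⊓ A.toSubmonoid) : ∃ c, ∀ t ∈ T, c * t ∈ S := by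
  obtain ⟨σ, hσS, hσA⟩ := exists_coset_rep_mul_mem A hS
  have := Fintype.ofFinite (G ⧸ A)
  let β (q : G ⧸ A) : ↥(S ⊓ A.toSubmonoid) :=
    ⟨σ q ^ A.index, S.pow_mem (hσS q) _, A.pow_index_mem _⟩
  refine ⟨↑(∏ q, β q), fun t ht => ?_⟩
  obtain ⟨y, hy⟩ := Finset.dvd_prod_of_mem β (Finset.mem_univ (t : G ⧸ A))
  have hσt : σ t * t ∈ S ⊓ A.toSubmonoid :=
    hTA ▸ ⟨T.mul_mem (hST (hσS t)) ht, hσA t⟩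
  have : ↑(∏ q, β q) * t = y * σ t ^ (A.index - 1) * (σ t * t) := by
    rw [hy, mul_comm, Submonoid.coe_mul, mul_assoc, mul_assoc,
      ← mul_assoc (σ t ^ _), pow_sub_one_mul Subgroup.FiniteIndex.index_ne_zero]
  rw [this]
  exact S.mul_mem (S.mul_mem y.2.1 (S.pow_mem (hσS t) _)) hσt.1

theorem inf_eq_of_forall_mul_mul_mem (hS : IsGroupOfQuotients S)
    (hmax : IsMaximalOrderWithin (S ⊓ A.toSubmonoid))
    (hquot : quotSet (S ⊓ A.toSubmonoid) = A) (hST : S ≤ T) {a b : G}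
    (habT : ∀ t ∈ T, a * t * b ∈ S) : T ⊓ A.toSubmonoid = S ⊓ A.toSubmonoid := by
  obtain ⟨s, hs, hsa⟩ := exists_mem_mul_mem_of_isGroupOfQuotients A hS a
  obtain ⟨s', hs', hs'b⟩ := exists_mem_mul_mem_of_isGroupOfQuotients A hS b
  have hbs' : b * s' ∈ A := Subgroup.Normal.mem_comm ‹_› hs'b
  refine hmax _ (inf_le_inf_right _ hST) (hquot ▸ fun t ht => ht.2)
    ⟨s * a, hquot ▸ hsa, b * s', hquot ▸ hbs', fun t ⟨htT, htA⟩ => ⟨?_, ?_⟩⟩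
  · show s * a * t * (b * s') ∈ S
    simpa only [mul_assoc] using S.mul_mem hs (S.mul_mem (habT t htT) hs')
  · exact A.mul_mem (A.mul_mem hsa htA) hbs'

end

theorem maximalOrder_iff_maximal_among_submonoids_general
    {G : Type u} [Group G]
    (A : Subgroup G) (hnorm : A.Normal)
    (hab : ∀ x ∈ A, ∀ y ∈ A, x * y = y * x)
    (hfi : A.FiniteIndex)
    (B : Submonoid G)
    (hBquot : quotSet B = (A : Set G))
    (hBfg : B.FG)
    (hBmax : IsMaximalOrderWithin B)
    (S : Submonoid G) (hSquot : IsGroupOfQuotients S)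
    (hSA : S ⊓ A.toSubmonoid = B) :
    (IsMaximalOrderWithin S ∧ ACCRightIdeals S) ↔
    (∀ T : Submonoid G, S ≤ T → T ⊓ A.toSubmonoid = B → T = S) := by
  subst hSA
  have : IsMulCommutative ↥(S ⊓ A.toSubmonoid) :=
    ⟨⟨fun x y => Subtype.ext (hab _ x.2.2 _ y.2.2)⟩⟩
  refine ⟨fun ⟨hSmax, _⟩ T hST hTA => ?_, fun hSmax => ⟨?_, ?_⟩⟩
  · obtain ⟨c, hc⟩ := exists_forall_mul_mem_of_inf_eq A hSquot hST hTA
    exact hSmax T hST (fun t _ => hSquot t)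
      ⟨c, hSquot c, 1, hSquot 1, fun t ht => by simpa using hc t ht⟩
  · rintro T hST - ⟨a, -, b, -, habT⟩
    exact hSmax T hST (inf_eq_of_forall_mul_mul_mem A hSquot hBmax hBquot hST habT)
  · obtain ⟨σ, hσS, hσA⟩ := exists_coset_rep_mul_mem A hSquot
    exact accRightIdeals_of_fg_of_mul_mem hBfg inf_le_left σ
      fun x hx => ⟨x, S.mul_mem (hσS x) hx, hσA x⟩

/-- `S` is a maximal order satisfying the ACC on right ideals iff `S`
is maximal among the submonoids `T` of `G` with `T ∩ A = B`. -/
theorem maximalOrder_iff_maximal_among_submonoids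
    {G : Type u} [Group G]
    (A : Subgroup G) (hnorm : A.Normal)
    (hab : ∀ x ∈ A, ∀ y ∈ A, x * y = y * x)
    (hfi : A.FiniteIndex)
    (B : Submonoid G) (hBA : (B : Set G) ⊆ (A : Set G))
    (hBquot : quotSet B = (A : Set G))
    (hBfg : B.FG)
    (hBmax : IsMaximalOrderWithin B)
    (S : Submonoid G) (hSquot : IsGroupOfQuotients S)
    (hSA : S ⊓ A.toSubmonoid = B) :
    (IsMaximalOrderWithin S ∧ ACCRightIdeals S) ↔
    (∀ T : Submonoid G, S ≤ T → T ⊓ A.toSubmonoid = B → T = S) :=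
  maximalOrder_iff_maximal_among_submonoids_general A hnorm hab hfi B hBquot hBfg hBmax S hSquot hSA
end

section
/- The commutative monoid B with presentation ⟨a₁, a₂, a₃, a₄, a₅, a₆ | a₁a₂ = a₃a₄ = a₅a₆⟩ (as a commutative monoid) is cancellative, its group of quotients is torsion free, and B is a maximal order in its group of quotients. -/
/-!
Send the generator `a (2p + e)` to the indicator function of the facets `ε : Fin 3 → Fin 2`
with `ε p = e`. Every facet sees exactly one generator of each pair, so this is a
homomorphism `ψ` from `B` to the free commutative monoid `ℕ^8`. It reflects divisibility:
if `ψ (a (2p + e)) ≤ ψ s` but `a (2p + e)` does not occur in a word for `s`, evaluating at the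
facet with `ε p = e` that picks the rarer generator of every other pair shows that some full
product `a (2q) * a (2q + 1) = a (2p) * a (2p + 1)` divides `s`. Hence `B` embeds into `ℕ^8` as
a divisor-closed submonoid, and cancellativity, torsion-freeness and complete integral
closedness (the maximal order property) descend from `ℕ^8`, the last one because `ℕ` is
archimedean.
-/

open scoped Pointwise

universe u v

open Function

/-- Every fraction `x / y` of the group of quotients that is almost integral (all its powers
have the common denominator `c`) is already integral. -/
def IsCompletelyIntegrallyClosedMonoid (M : Type*) [CommMonoid M] : Prop :=
  ∀ c x y : M, (∀ n : ℕ, y ^ n ∣ c * x ^ n) → y ∣ x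

theorem Nat.le_of_forall_mul_le_add {a b c : ℕ} (h : ∀ n : ℕ, n * a ≤ c + n * b) : a ≤ b := by
  by_contra! hba
  have := h (c + 1)
  nlinarith

theorem isCompletelyIntegrallyClosedMonoid_multiplicative_pi_nat (κ : Type*) :
    IsCompletelyIntegrallyClosedMonoid (Multiplicative (κ → ℕ)) := by
  intro c x y h
  refine le_iff_exists_mul.mp <| Multiplicative.toAdd_le.mp fun k =>
    Nat.le_of_forall_mul_le_add (c := c.toAdd k) fun n => ?_
  have hn : (y ^ n).toAdd k ≤ (c * x ^ n).toAdd k := le_iff_exists_mul.mpr (h n) k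
  simpa [mul_comm n] using hn

theorem IsCompletelyIntegrallyClosedMonoid.of_map_dvd {M N : Type*} [CommMonoid M]
    [CommMonoid N] (hN : IsCompletelyIntegrallyClosedMonoid N) (f : M →* N)
    (hf : ∀ u s, f u ∣ f s → u ∣ s) : IsCompletelyIntegrallyClosedMonoid M :=
  fun c x y h => hf _ _ <| hN (f c) _ _ fun n => by simpa using map_dvd f (h n)

theorem MonoidHom.injective_of_map_dvd {M N : Type*} [CommMonoid M] [CommMonoid N]
    [IsLeftCancelMul N] (f : M →* N) (hf : ∀ u s, f u ∣ f s → u ∣ s)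
    (hker : ∀ k, f k = 1 → k = 1) : Injective f := by
  intro s u hsu
  obtain ⟨k, rfl⟩ := hf u s (hsu ▸ dvd_rfl)
  have hk : f u * f k = f u := by rw [← map_mul, hsu]
  rw [hker k (mul_eq_left.mp hk), mul_one]

section GroupOfQuotients

variable {M A : Type*} [CommMonoid M] [CommGroup A] {ι : M →* A}

theorem isMaximalOrderWithin_mrange (hι : Injective ι)
    (hM : IsCompletelyIntegrallyClosedMonoid M) : IsMaximalOrderWithin (MonoidHom.mrange ι) := by
  rintro T hST hTq
    ⟨_, ⟨_, ⟨a₁, rfl⟩, _, ⟨a₂, rfl⟩, rfl⟩, _, ⟨_, ⟨b₁, rfl⟩, _, ⟨b₂, rfl⟩, rfl⟩, habT⟩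
  refine le_antisymm (fun g hg => ?_) hST
  obtain ⟨_, ⟨s, rfl⟩, _, ⟨u, rfl⟩, rfl⟩ := hTq hg
  have hdvd : ∀ n : ℕ, u ^ n ∣ (a₁ * b₁) * s ^ n := fun n => by
    obtain ⟨m, hm⟩ := habT _ (pow_mem hg n)
    refine ⟨m * (a₂ * b₂), hι ?_⟩
    simp only [map_mul, map_pow, mul_pow, inv_pow] at hm ⊢
    rw [hm]
    apply Additive.ofMul.injective
    simp only [ofMul_mul, ofMul_inv]
    abel
  obtain ⟨k, rfl⟩ := hM _ _ _ hdvd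
  exact ⟨k, by simp⟩

theorem eq_one_of_pow_eq_one_of_isGroupOfQuotients [IsMulTorsionFree M] (hι : Injective ι)
    (hq : IsGroupOfQuotients (MonoidHom.mrange ι)) {g : A} {n : ℕ} (hn : n ≠ 0)
    (hg : g ^ n = 1) : g = 1 := by
  obtain ⟨_, ⟨s, rfl⟩, _, ⟨u, rfl⟩, rfl⟩ := hq g
  have : s ^ n = u ^ n := hι <| by simpa [mul_pow, mul_inv_eq_one] using hg
  simp [IsMulTorsionFree.pow_left_injective hn this]

end GroupOfQuotients

theorem nonempty_groupOfQuotientsRealization (M : Type*) [CommMonoid M] [IsCancelMul M] :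
    Nonempty (GroupOfQuotientsRealization M) := by
  refine ⟨⟨Algebra.GrothendieckGroup M, Algebra.GrothendieckGroup.of,
    Algebra.GrothendieckGroup.of_injective, fun g => ?_⟩⟩
  induction g using Localization.ind with
  | _ p =>
    exact ⟨p.1, p.2, by simp [← Localization.mk_one_eq_monoidOf_mk, Localization.mk_mul]⟩

def facetVector {ι : Type*} (p : ι) (e : Fin 2) : Multiplicative ((ι → Fin 2) → ℕ) :=
  Multiplicative.ofAdd fun ε => if ε p = e then 1 else 0

theorem facetVector_zero_mul_facetVector_one {ι : Type*} (p : ι) :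
    facetVector p 0 * facetVector p 1 = Multiplicative.ofAdd 1 := by
  refine congrArg Multiplicative.ofAdd (funext fun ε => ?_)
  rcases Fin.exists_fin_two.mp ⟨ε p, rfl⟩ with h | h <;> simp [facetVector, h]

namespace DiagonalAmalgam

variable {ι M : Type*} [CommMonoid M] {x : ι → Fin 2 → M} {z : M}
  {ψ : M →* Multiplicative ((ι → Fin 2) → ℕ)}

theorem exists_eq_prod_pow [Fintype ι] (hgen : Submonoid.closure (Set.range (uncurry x)) = ⊤)
    (s : M) : ∃ n : ι → Fin 2 → ℕ, s = ∏ q, ∏ f, x q f ^ n q f := by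
  obtain ⟨n, hn⟩ := Submonoid.mem_closure_range_iff_of_fintype.mp (hgen ▸ Submonoid.mem_top s)
  exact ⟨curry n, by rw [hn, Fintype.prod_prod_type]; rfl⟩

theorem toAdd_map_prod_pow [Fintype ι] (hψ : ∀ p e, ψ (x p e) = facetVector p e)
    (n : ι → Fin 2 → ℕ) (ε : ι → Fin 2) :
    (ψ (∏ q, ∏ f, x q f ^ n q f)).toAdd ε = ∑ q, n q (ε q) := by
  simp only [map_prod, map_pow, hψ, toAdd_prod, toAdd_pow, Finset.sum_apply, Pi.smul_apply,
    facetVector, toAdd_ofAdd, smul_eq_mul, mul_ite, mul_one, mul_zero, Finset.sum_ite_eq,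
    Finset.mem_univ, if_true]

theorem dvd_of_map_dvd_map [Fintype ι] [DecidableEq ι] (hz : ∀ p, x p 0 * x p 1 = z)
    (hgen : Submonoid.closure (Set.range (uncurry x)) = ⊤)
    (hψ : ∀ p e, ψ (x p e) = facetVector p e) {p : ι} {e : Fin 2} {s : M}
    (h : ψ (x p e) ∣ ψ s) : x p e ∣ s := by
  obtain ⟨n, rfl⟩ := exists_eq_prod_pow hgen s
  have hfac : ∀ q, ∏ f, x q f ^ n q f ∣ ∏ q, ∏ f, x q f ^ n q f := fun q =>
    Finset.dvd_prod_of_mem (fun q => ∏ f, x q f ^ n q f) (Finset.mem_univ q)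
  by_cases hpe : n p e = 0
  · set ε : ι → Fin 2 := update (fun q => if n q 0 ≤ n q 1 then 0 else 1) p e
    have hpos : 0 < ∑ q, n q (ε q) := by
      obtain ⟨c, hc⟩ := h
      rw [← toAdd_map_prod_pow hψ, hc]
      simp [hψ, facetVector, ε]
    obtain ⟨q, -, hq⟩ := Finset.sum_pos_iff.mp hpos
    have hqp : q ≠ p := by rintro rfl; simp [ε, hpe] at hq
    have hq01 : n q 0 ≠ 0 ∧ n q 1 ≠ 0 := by
      simp only [ε, update_of_ne hqp] at hq
      split_ifs at hq <;> omega
    calc x p e ∣ x p 0 * x p 1 := by fin_cases e; exacts [dvd_mul_right _ _, dvd_mul_left _ _]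
      _ = x q 0 * x q 1 := (hz p).trans (hz q).symm
      _ ∣ ∏ f, x q f ^ n q f := by
        rw [Fin.prod_univ_two]
        exact mul_dvd_mul (dvd_pow_self _ hq01.1) (dvd_pow_self _ hq01.2)
      _ ∣ _ := hfac q
  · exact (dvd_pow_self _ hpe).trans <|
      (Finset.dvd_prod_of_mem (fun f => x p f ^ n p f) (Finset.mem_univ e)).trans (hfac p)

theorem dvd_of_map_dvd [Fintype ι] [DecidableEq ι] (hz : ∀ p, x p 0 * x p 1 = z)
    (hgen : Submonoid.closure (Set.range (uncurry x)) = ⊤)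
    (hψ : ∀ p e, ψ (x p e) = facetVector p e) (u s : M) (h : ψ u ∣ ψ s) : u ∣ s := by
  induction u using Submonoid.induction_of_closure_eq_top_left hgen generalizing s with
  | one => exact one_dvd s
  | mul_left g hg u ih =>
    obtain ⟨⟨p, e⟩, rfl⟩ := hg
    rw [map_mul] at h
    obtain ⟨s, rfl⟩ := dvd_of_map_dvd_map hz hgen hψ ((dvd_mul_right _ _).trans h)
    obtain ⟨c, hc⟩ := h
    rw [map_mul, mul_assoc] at hc
    exact mul_dvd_mul_left _ (ih s ⟨c, mul_left_cancel hc⟩)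

theorem eq_one_of_map_eq_one (hgen : Submonoid.closure (Set.range (uncurry x)) = ⊤)
    (hψ : ∀ p e, ψ (x p e) = facetVector p e) (k : M) (hk : ψ k = 1) : k = 1 := by
  induction k using Submonoid.induction_of_closure_eq_top_left hgen with
  | one => rfl
  | mul_left g hg k _ =>
    obtain ⟨⟨p, e⟩, rfl⟩ := hg
    have := congrArg (fun v => v.toAdd fun _ => e) hk
    simp [hψ, facetVector] at this

theorem map_injective [Fintype ι] [DecidableEq ι] (hz : ∀ p, x p 0 * x p 1 = z)
    (hgen : Submonoid.closure (Set.range (uncurry x)) = ⊤)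
    (hψ : ∀ p e, ψ (x p e) = facetVector p e) : Injective ψ :=
  ψ.injective_of_map_dvd (dvd_of_map_dvd hz hgen hψ) (eq_one_of_map_eq_one hgen hψ)

end DiagonalAmalgam

/-- the commutative monoid `⟨a₁,…,a₆ ∣ a₁a₂ = a₃a₄ = a₅a₆⟩` is
cancellative, its group of quotients is torsion free, and it is a maximal order
in its group of quotients. -/
theorem Bmonoid_cancellative_torsionfree_maximalOrder
    (M : Type) [CommMonoid M] (a : Fin 6 → M)
    (hrel₁ : a 0 * a 1 = a 2 * a 3)
    (hrel₂ : a 2 * a 3 = a 4 * a 5)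
    (hgen : Submonoid.closure (Set.range a) = ⊤)
    (huniv : ∀ (N : Type) [CommMonoid N] (b : Fin 6 → N),
      b 0 * b 1 = b 2 * b 3 → b 2 * b 3 = b 4 * b 5 →
      ∃! f : M →* N, ∀ i, f (a i) = b i) :
    (∀ x y z : M, x * z = y * z → x = y) ∧
    Nonempty (GroupOfQuotientsRealization M) ∧
    ∀ (A : Type) [CommGroup A] (ι : M →* A), Function.Injective ι →
      IsGroupOfQuotients (MonoidHom.mrange ι) →
      ((∀ g : A, ∀ n : ℕ, 0 < n → g ^ n = 1 → g = 1) ∧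
       IsMaximalOrderWithin (MonoidHom.mrange ι)) := by
  let idx : Fin 3 × Fin 2 ≃ Fin 6 := finProdFinEquiv
  let x : Fin 3 → Fin 2 → M := curry (a ∘ idx)
  have hz : ∀ p, x p 0 * x p 1 = a 0 * a 1 := by
    intro p
    fin_cases p
    exacts [rfl, hrel₁.symm, (hrel₁.trans hrel₂).symm]
  have hxgen : Submonoid.closure (Set.range (uncurry x)) = ⊤ := by
    rwa [uncurry_curry, EquivLike.range_comp]
  obtain ⟨ψ, hψ, -⟩ := huniv _ (uncurry facetVector ∘ idx.symm)
    (show facetVector 0 0 * facetVector 0 1 = facetVector 1 0 * facetVector 1 1 by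
      simp only [facetVector_zero_mul_facetVector_one])
    (show facetVector 1 0 * facetVector 1 1 = facetVector 2 0 * facetVector 2 1 by
      simp only [facetVector_zero_mul_facetVector_one])
  have hψx : ∀ p e, ψ (x p e) = facetVector p e := by simp [x, hψ]
  have hinj := DiagonalAmalgam.map_injective hz hxgen hψx
  have := hinj.isCancelMul _ (map_mul ψ)
  have := hinj.isMulTorsionFree ψ
  have hcic := (isCompletelyIntegrallyClosedMonoid_multiplicative_pi_nat _).of_map_dvd ψ
    (DiagonalAmalgam.dvd_of_map_dvd hz hxgen hψx)
  refine ⟨fun _ _ _ => mul_right_cancel, nonempty_groupOfQuotientsRealization M,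
    fun A _ ι hι hq => ⟨fun g n hn => eq_one_of_pow_eq_one_of_isGroupOfQuotients hι hq hn.ne',
      isMaximalOrderWithin_mrange hι hcic⟩⟩
end
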